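/- arXiv:0809.0298 — 2 statements merged into one kernel-verified Lean document; each statement's English description precedes it below -/
import Mathlib

section
/- (Main preprocessing criterion.) Let f and g be nonzero polynomials in ℂ[x,y]. If Trop(f) ∩ Trop(g) = ∅, then f and g have no common factor which is not a monomial: there is no polynomial r ∈ ℂ[x,y] whose support contains at least two points such that r divides f and r divides g. -/
open MvPolynomial

/-- The minimal weighted degree `m_{(u,v)}(f) = min { i*u + j*v : (i,j) ∈ supp(f) }`. -/
noncomputable def wdeg (u v : ℤ) (f : MvPolynomial (Fin 2) ℂ) : ℤ :=
  sInf ((fun a : Fin 2 →₀ ℕ => (a 0 : ℤ) * u + (a 1 : ℤ) * v) '' ↑f.support)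

/-- The initial form `in_{(u,v)}(f)`: the sum of the terms of `f` whose exponent
vector attains the minimal weighted degree. -/
noncomputable def initForm (u v : ℤ) (f : MvPolynomial (Fin 2) ℂ) :
    MvPolynomial (Fin 2) ℂ :=
  ∑ a ∈ f.support.filter (fun a => (a 0 : ℤ) * u + (a 1 : ℤ) * v = wdeg u v f),
    monomial a (f.coeff a)

/-- The tropicalization `Trop(f)`: nonzero integer vectors `(u,v)` such that the
initial form `in_{(u,v)}(f)` has at least two monomials. -/
def trop (f : MvPolynomial (Fin 2) ℂ) : Set (ℤ × ℤ) :=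
  { uv | uv ≠ (0, 0) ∧ 2 ≤ (initForm uv.1 uv.2 f).support.card }

/-!
If `r` has at least two terms, its Newton polygon has an edge, and the inner normal `w` of
that edge lies in `Trop(r)`. Initial forms are multiplicative, `in_w(r s) = in_w(r) in_w(s)`,
and a product of nonzero polynomials one of which has two terms again has two terms (compare
the lowest and the highest weight of a separating weight). Hence `Trop(r) ⊆ Trop(f)` whenever
`r ∣ f`, so a common non-monomial factor of `f` and `g` gives a common point of `Trop(f)` and
`Trop(g)`.
-/

def wt (u v : ℤ) (a : Fin 2 →₀ ℕ) : ℤ := (a 0 : ℤ) * u + (a 1 : ℤ) * v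

lemma wt_add (u v : ℤ) (a b : Fin 2 →₀ ℕ) : wt u v (a + b) = wt u v a + wt u v b := by
  simp only [wt, Finsupp.add_apply]
  push_cast
  ring

lemma wt_neg (u v : ℤ) (a : Fin 2 →₀ ℕ) : wt (-u) (-v) a = -wt u v a := by
  simp only [wt]
  ring

section wdeg

variable {u v : ℤ} {f : MvPolynomial (Fin 2) ℂ}

lemma wdeg_le {a : Fin 2 →₀ ℕ} (ha : a ∈ f.support) : wdeg u v f ≤ wt u v a :=
  csInf_le (f.support.finite_toSet.image _).bddBelow ⟨a, ha, rfl⟩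

lemma le_wdeg {c : ℤ} (hf : f ≠ 0) (h : ∀ a ∈ f.support, c ≤ wt u v a) : c ≤ wdeg u v f := by
  obtain ⟨a, ha⟩ := support_nonempty.2 hf
  refine le_csInf ⟨wt u v a, a, ha, rfl⟩ ?_
  rintro _ ⟨b, hb, rfl⟩
  exact h b hb

lemma exists_mem_support_wt_eq_wdeg (hf : f ≠ 0) :
    ∃ a ∈ f.support, wt u v a = wdeg u v f := by
  obtain ⟨a, ha⟩ := support_nonempty.2 hf
  exact Set.Nonempty.csInf_mem (s := wt u v '' ↑f.support) ⟨_, a, ha, rfl⟩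
    (f.support.finite_toSet.image _)

lemma wdeg_eq_of_forall_le {a : Fin 2 →₀ ℕ} (ha : a ∈ f.support)
    (h : ∀ b ∈ f.support, wt u v a ≤ wt u v b) : wdeg u v f = wt u v a :=
  (wdeg_le ha).antisymm (le_wdeg (ne_zero_iff.2 ⟨a, mem_support_iff.1 ha⟩) h)

/-- `-wdeg (-u) (-v) f` is the highest `(u,v)`-weight of a term of `f`. -/
lemma wdeg_add_wdeg_neg_le {a b : Fin 2 →₀ ℕ} (ha : a ∈ f.support) (hb : b ∈ f.support) :
    wdeg u v f + wdeg (-u) (-v) f ≤ -|wt u v a - wt u v b| := by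
  have ha₁ : wdeg u v f ≤ wt u v a := wdeg_le ha
  have hb₁ : wdeg u v f ≤ wt u v b := wdeg_le hb
  have ha₂ : wdeg (-u) (-v) f ≤ -wt u v a := wt_neg u v a ▸ wdeg_le ha
  have hb₂ : wdeg (-u) (-v) f ≤ -wt u v b := wt_neg u v b ▸ wdeg_le hb
  rcases abs_cases (wt u v a - wt u v b) with ⟨h, -⟩ | ⟨h, -⟩ <;> omega

end wdeg

section initForm

variable {u v : ℤ} {p q : MvPolynomial (Fin 2) ℂ}

lemma coeff_initForm (u v : ℤ) (f : MvPolynomial (Fin 2) ℂ) (b : Fin 2 →₀ ℕ) :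
    coeff b (initForm u v f) = if wt u v b = wdeg u v f then coeff b f else 0 := by
  rw [initForm, coeff_sum]
  simp_rw [coeff_monomial]
  rw [Finset.sum_ite_eq']
  split_ifs with h₁ h₂ h₂
  · rfl
  · exact absurd (Finset.mem_filter.1 h₁).2 h₂
  · exact (notMem_support_iff.1 fun hb => h₁ (Finset.mem_filter.2 ⟨hb, h₂⟩)).symm
  · rfl

lemma support_initForm (u v : ℤ) (f : MvPolynomial (Fin 2) ℂ) :
    (initForm u v f).support = f.support.filter (fun a => wt u v a = wdeg u v f) := by
  ext b
  simp only [mem_support_iff, coeff_initForm, Finset.mem_filter]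
  split_ifs <;> tauto

lemma initForm_ne_zero (hp : p ≠ 0) : initForm u v p ≠ 0 := by
  obtain ⟨a, ha, hwa⟩ := exists_mem_support_wt_eq_wdeg (u := u) (v := v) hp
  rw [← support_nonempty, support_initForm]
  exact ⟨a, Finset.mem_filter.2 ⟨ha, hwa⟩⟩

lemma wt_eq_of_mem_support_initForm_mul {b : Fin 2 →₀ ℕ}
    (hb : b ∈ (initForm u v p * initForm u v q).support) :
    wt u v b = wdeg u v p + wdeg u v q := by
  obtain ⟨x, hx, y, hy, rfl⟩ := Finset.mem_add.1 (support_mul _ _ hb)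
  rw [support_initForm, Finset.mem_filter] at hx hy
  rw [wt_add, hx.2, hy.2]

lemma coeff_mul_of_wt_eq {b : Fin 2 →₀ ℕ} (hb : wt u v b = wdeg u v p + wdeg u v q) :
    coeff b (p * q) = coeff b (initForm u v p * initForm u v q) := by
  rw [coeff_mul, coeff_mul]
  refine Finset.sum_congr rfl ?_
  rintro ⟨x, y⟩ hxy
  replace hxy : x + y = b := Finset.HasAntidiagonal.mem_antidiagonal.1 hxy
  dsimp only
  by_cases hx : x ∈ p.support
  · by_cases hy : y ∈ q.support
    · have hsum : wt u v x + wt u v y = wdeg u v p + wdeg u v q := by rw [← wt_add, hxy, hb]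
      have hx' : wdeg u v p ≤ wt u v x := wdeg_le hx
      have hy' : wdeg u v q ≤ wt u v y := wdeg_le hy
      rw [coeff_initForm, coeff_initForm, if_pos (by omega), if_pos (by omega)]
    · simp [notMem_support_iff.1 hy, coeff_initForm]
  · simp [notMem_support_iff.1 hx, coeff_initForm]

lemma wdeg_mul (hp : p ≠ 0) (hq : q ≠ 0) :
    wdeg u v (p * q) = wdeg u v p + wdeg u v q := by
  obtain ⟨b, hb⟩ := support_nonempty.2 (mul_ne_zero (initForm_ne_zero (u := u) (v := v) hp)
    (initForm_ne_zero (u := u) (v := v) hq))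
  have hwb := wt_eq_of_mem_support_initForm_mul hb
  have hb' : b ∈ (p * q).support := by
    rw [mem_support_iff, coeff_mul_of_wt_eq hwb]
    exact mem_support_iff.1 hb
  refine (hwb ▸ wdeg_le hb').antisymm (le_wdeg (mul_ne_zero hp hq) fun a ha => ?_)
  obtain ⟨x, hx, y, hy, rfl⟩ := Finset.mem_add.1 (support_mul _ _ ha)
  rw [wt_add]
  exact add_le_add (wdeg_le hx) (wdeg_le hy)

lemma initForm_mul (hp : p ≠ 0) (hq : q ≠ 0) :
    initForm u v (p * q) = initForm u v p * initForm u v q := by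
  ext b
  rw [coeff_initForm, wdeg_mul hp hq]
  split_ifs with hb
  · exact coeff_mul_of_wt_eq hb
  · by_contra h
    exact hb (wt_eq_of_mem_support_initForm_mul (mem_support_iff.2 (Ne.symm h)))

end initForm

lemma exists_wt_ne {a b : Fin 2 →₀ ℕ} (hab : a ≠ b) : ∃ u v : ℤ, wt u v a ≠ wt u v b := by
  by_contra! h
  apply hab
  ext i
  fin_cases i
  · simpa [wt] using h 1 0
  · simpa [wt] using h 0 1

lemma two_le_card_support_mul {A B : MvPolynomial (Fin 2) ℂ} (hA : 2 ≤ A.support.card)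
    (hB : B ≠ 0) : 2 ≤ (A * B).support.card := by
  obtain ⟨x, hx, y, hy, hxy⟩ := Finset.one_lt_card.1 hA
  have hA0 : A ≠ 0 := ne_zero_iff.2 ⟨x, mem_support_iff.1 hx⟩
  obtain ⟨u, v, hsep⟩ := exists_wt_ne hxy
  replace hsep : 0 < |wt u v x - wt u v y| := abs_pos.2 (sub_ne_zero.2 hsep)
  obtain ⟨z, hz⟩ := support_nonempty.2 hB
  have hAB := mul_ne_zero hA0 hB
  obtain ⟨b, hb, hwb⟩ := exists_mem_support_wt_eq_wdeg (u := u) (v := v) hAB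
  obtain ⟨c, hc, hwc⟩ := exists_mem_support_wt_eq_wdeg (u := -u) (v := -v) hAB
  refine Finset.one_lt_card.2 ⟨b, hb, c, hc, fun hbc => ?_⟩
  have hAw := wdeg_add_wdeg_neg_le (u := u) (v := v) hx hy
  have hBw := wdeg_add_wdeg_neg_le (u := u) (v := v) hz hz
  rw [wdeg_mul hA0 hB] at hwb
  rw [wdeg_mul hA0 hB, ← hbc, wt_neg] at hwc
  simp only [sub_self, abs_zero, neg_zero] at hBw
  omega

lemma trop_subset_of_dvd {r f : MvPolynomial (Fin 2) ℂ} (hf : f ≠ 0) (hrf : r ∣ f) :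
    trop r ⊆ trop f := by
  obtain ⟨s, rfl⟩ := hrf
  rintro ⟨u, v⟩ ⟨huv, hcard⟩
  refine ⟨huv, ?_⟩
  rw [initForm_mul (left_ne_zero_of_mul hf) (right_ne_zero_of_mul hf)]
  exact two_le_card_support_mul hcard (initForm_ne_zero (right_ne_zero_of_mul hf))

/-- The edge `t m` of the convex hull: `t` is the leftmost point and `m` minimises the slope
seen from `t`, unless a second point is leftmost and the edge is vertical. -/
lemma exists_weight_min_attained_twice (S : Finset (Fin 2 →₀ ℕ)) (hS : 2 ≤ S.card) :
    ∃ u v : ℤ, (u, v) ≠ (0, 0) ∧ ∃ t ∈ S, ∃ m ∈ S, t ≠ m ∧ wt u v m = wt u v t ∧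
      ∀ s ∈ S, wt u v t ≤ wt u v s := by
  obtain ⟨t, ht, htmin⟩ := S.exists_min_image (fun s => s 0) (Finset.card_pos.1 (by omega))
  by_cases hvert : ∃ m ∈ S, m ≠ t ∧ m 0 = t 0
  · obtain ⟨m, hm, hmt, hm0⟩ := hvert
    refine ⟨1, 0, by simp, t, ht, m, hm, hmt.symm, by simp [wt, hm0], fun s hs => ?_⟩
    simpa [wt] using htmin s hs
  push Not at hvert
  have hright : ∀ s ∈ S.erase t, (t 0 : ℚ) < s 0 := fun s hs => by
    obtain ⟨hst, hs⟩ := Finset.mem_erase.1 hs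
    exact_mod_cast (htmin s hs).lt_of_ne (hvert s hs hst).symm
  have hne : (S.erase t).Nonempty := Finset.card_pos.1 (by rw [Finset.card_erase_of_mem ht]; omega)
  obtain ⟨m, hm, hmmin⟩ := (S.erase t).exists_min_image
    (fun s => ((s 1 : ℚ) - t 1) / ((s 0 : ℚ) - t 0)) hne
  have hm0 := hright m hm
  obtain ⟨hmt, hmS⟩ := Finset.mem_erase.1 hm
  refine ⟨-((m 1 : ℤ) - t 1), (m 0 : ℤ) - t 0, fun h => ?_, t, ht, m, hmS, hmt.symm,
    by simp only [wt]; ring, fun s hs => ?_⟩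
  · have : (m 0 : ℚ) = t 0 := by exact_mod_cast (sub_eq_zero.1 (Prod.mk.inj h).2)
    linarith
  · by_cases hst : s = t
    · rw [hst]
    have hs' : s ∈ S.erase t := Finset.mem_erase.2 ⟨hst, hs⟩
    have hslope := hmmin s hs'
    rw [div_le_div_iff₀ (sub_pos.2 hm0) (sub_pos.2 (hright s hs'))] at hslope
    have hcross : ((m 1 : ℤ) - t 1) * ((s 0 : ℤ) - t 0) ≤
        ((s 1 : ℤ) - t 1) * ((m 0 : ℤ) - t 0) := by
      exact_mod_cast hslope
    simp only [wt]
    linarith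

lemma mem_trop_of_min_attained_twice {r : MvPolynomial (Fin 2) ℂ} {u v : ℤ}
    (huv : (u, v) ≠ (0, 0)) {t m : Fin 2 →₀ ℕ} (ht : t ∈ r.support) (hm : m ∈ r.support)
    (htm : t ≠ m) (hwm : wt u v m = wt u v t) (hmin : ∀ s ∈ r.support, wt u v t ≤ wt u v s) :
    (u, v) ∈ trop r := by
  have hdeg := wdeg_eq_of_forall_le ht hmin
  refine ⟨huv, Finset.one_lt_card.2 ⟨t, ?_, m, ?_, htm⟩⟩ <;>
    rw [support_initForm, Finset.mem_filter]
  · exact ⟨ht, hdeg.symm⟩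
  · exact ⟨hm, hwm.trans hdeg.symm⟩

lemma trop_nonempty {r : MvPolynomial (Fin 2) ℂ} (hr : 2 ≤ r.support.card) :
    (trop r).Nonempty := by
  obtain ⟨u, v, huv, t, ht, m, hm, htm, hwm, hmin⟩ := exists_weight_min_attained_twice _ hr
  exact ⟨(u, v), mem_trop_of_min_attained_twice huv ht hm htm hwm hmin⟩

/-- Main preprocessing criterion: if the tropicalizations of `f` and `g` are disjoint,
then `f` and `g` have no common factor that is not a monomial. -/
theorem no_common_factor (f g : MvPolynomial (Fin 2) ℂ) (hf : f ≠ 0) (hg : g ≠ 0)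
    (htrop : trop f ∩ trop g = ∅) :
    ¬ ∃ r : MvPolynomial (Fin 2) ℂ, 2 ≤ r.support.card ∧ r ∣ f ∧ r ∣ g := by
  rintro ⟨r, hr, hrf, hrg⟩
  obtain ⟨w, hw⟩ := trop_nonempty hr
  have hw' : w ∈ trop f ∩ trop g := ⟨trop_subset_of_dvd hf hrf hw, trop_subset_of_dvd hg hrg hw⟩
  simp [htrop] at hw'
end

section
/- Let f be a nonzero polynomial in ℂ[x,y] and (u,v) ∈ ℤ² \ {(0,0)}. Then the initial form in_{(u,v)}(f) has a zero in the torus (ℂ*)² if and only if supp(in_{(u,v)}(f)) contains at least two points, i.e. if and only if (u,v) ∈ Trop(f). -/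
open MvPolynomial

/-!
A monomial does not vanish on the torus, and the initial form of a nonzero polynomial is nonzero,
since a term of minimal weight survives in it. Conversely, over an algebraically closed field a
polynomial in `x₀, …, xₙ` with at least two terms vanishes somewhere on the torus. View it as a
polynomial in `x₀` with coefficients in the remaining variables. If two coefficients are nonzero,
specialise the remaining variables at a torus point where no nonzero coefficient vanishes: this
leaves a one-variable polynomial with two terms, whose roots cannot all be `0`. Otherwise it is
`x₀ᵏ` times a polynomial in fewer variables with at least two terms, and induction applies.
-/

namespace MvPolynomial

theorem eval_ne_zero_of_card_support_le_one {σ R : Type*} [CommSemiring R] [IsDomain R]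
    {g : MvPolynomial σ R} (hg : g ≠ 0) (hcard : g.support.card ≤ 1) {x : σ → R}
    (hx : ∀ i, x i ≠ 0) : eval x g ≠ 0 := by
  obtain ⟨a, ha⟩ := Finset.card_eq_one.mp
    (le_antisymm hcard (Finset.card_pos.mpr (support_nonempty.mpr hg)))
  have hc : coeff a g ≠ 0 := mem_support_iff.mp (ha ▸ Finset.mem_singleton_self a)
  rw [g.as_sum, ha, Finset.sum_singleton, eval_monomial]
  exact mul_ne_zero hc (Finset.prod_ne_zero_iff.mpr fun i _ => pow_ne_zero _ (hx i))

theorem exists_forall_ne_zero_eval_ne_zero {σ R : Type*} [Fintype σ] [CommRing R] [IsDomain R]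
    [Infinite R] {q : MvPolynomial σ R} (hq : q ≠ 0) :
    ∃ x : σ → R, (∀ i, x i ≠ 0) ∧ eval x q ≠ 0 := by
  have hprod : q * ∏ i, X i ≠ 0 :=
    mul_ne_zero hq (Finset.prod_ne_zero_iff.mpr fun i _ => X_ne_zero i)
  obtain ⟨x, hx⟩ : ∃ x : σ → R, eval x (q * ∏ i, X i) ≠ 0 := by
    by_contra! h
    exact hprod (funext fun x => by simpa using h x)
  rw [map_mul, map_prod] at hx
  exact ⟨x, fun i => by simpa using Finset.prod_ne_zero_iff.mp (right_ne_zero_of_mul hx) i,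
    left_ne_zero_of_mul hx⟩

variable {n : ℕ}

theorem card_support_eq_of_support_finSuccEquiv_subset {R : Type*} [CommSemiring R]
    {g : MvPolynomial (Fin (n + 1)) R} {k : ℕ} (hk : (finSuccEquiv R n g).support ⊆ {k}) :
    g.support.card = ((finSuccEquiv R n g).coeff k).support.card := by
  have hfilter : {m ∈ g.support | m 0 = k} = g.support := by
    refine Finset.filter_true_of_mem fun m hm => Finset.mem_singleton.mp (hk ?_)
    rw [support_finSuccEquiv]
    exact Finset.mem_image_of_mem _ hm
  rw [← hfilter, ← image_support_finSuccEquiv,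
    Finset.card_image_of_injective _ (Finsupp.cons_right_injective k)]

end MvPolynomial

section

variable {K : Type*} [Field K] [IsAlgClosed K]

theorem Polynomial.exists_ne_zero_isRoot_of_two_le_card_support {p : Polynomial K}
    (hp : 2 ≤ p.support.card) : ∃ z ≠ 0, p.IsRoot z := by
  by_contra! h
  have hroots : p.roots = Multiset.replicate p.natDegree 0 :=
    Multiset.eq_replicate.mpr ⟨IsAlgClosed.card_roots_eq_natDegree, fun z hz => by
      by_contra hz0
      exact h z hz0 (Polynomial.isRoot_of_mem_roots hz)⟩
  have hmono : p = Polynomial.C p.leadingCoeff * Polynomial.X ^ p.natDegree := by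
    conv_lhs => rw [← Polynomial.C_leadingCoeff_mul_prod_multiset_X_sub_C
      (IsAlgClosed.card_roots_eq_natDegree (p := p))]
    simp [hroots]
  have : p.support.card ≤ 1 := by
    rw [hmono, Polynomial.C_mul_X_pow_eq_monomial]
    exact Polynomial.card_support_le_one_iff_monomial.mpr ⟨_, _, rfl⟩
  omega

namespace MvPolynomial

variable {n : ℕ}

theorem exists_torus_zero_of_two_le_card_support_finSuccEquiv {g : MvPolynomial (Fin (n + 1)) K}
    (hg : 2 ≤ (finSuccEquiv K n g).support.card) :
    ∃ x : Fin (n + 1) → K, (∀ i, x i ≠ 0) ∧ eval x g = 0 := by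
  set P := finSuccEquiv K n g
  obtain ⟨y, hy, hPy⟩ :
      ∃ y : Fin n → K, (∀ i, y i ≠ 0) ∧ eval y (∏ i ∈ P.support, P.coeff i) ≠ 0 :=
    exists_forall_ne_zero_eval_ne_zero
      (Finset.prod_ne_zero_iff.mpr fun i hi => Polynomial.mem_support_iff.mp hi)
  rw [map_prod, Finset.prod_ne_zero_iff] at hPy
  have hsupp : P.support ⊆ (P.map (eval y)).support := fun i hi => by
    simpa [Polynomial.coeff_map] using hPy i hi
  obtain ⟨x, hx, hroot⟩ :=
    Polynomial.exists_ne_zero_isRoot_of_two_le_card_support (hg.trans (Finset.card_le_card hsupp))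
  exact ⟨Fin.cons x y, Fin.cases hx hy, by rw [eval_eq_eval_mv_eval']; exact hroot⟩

theorem exists_torus_zero_of_two_le_card_support :
    ∀ {n : ℕ} {g : MvPolynomial (Fin n) K}, 2 ≤ g.support.card →
      ∃ x : Fin n → K, (∀ i, x i ≠ 0) ∧ eval x g = 0
  | 0, g, hg => absurd (Finset.card_le_one_of_subsingleton g.support) (by omega)
  | n + 1, g, hg => by
    set P := finSuccEquiv K n g
    by_cases hP : 2 ≤ P.support.card
    · exact exists_torus_zero_of_two_le_card_support_finSuccEquiv hP
    obtain ⟨k, hk⟩ := Finset.card_le_one_iff_subset_singleton.mp (by omega : P.support.card ≤ 1)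
    obtain ⟨y, hy, hyk⟩ := exists_torus_zero_of_two_le_card_support
      (card_support_eq_of_support_finSuccEquiv_subset hk ▸ hg)
    have hPy : P.map (eval y) = 0 := by
      ext i
      rw [Polynomial.coeff_map, Polynomial.coeff_zero]
      by_cases hi : i = k
      · exact hi ▸ hyk
      · rw [Polynomial.notMem_support_iff.mp fun h => hi (Finset.mem_singleton.mp (hk h)),
          map_zero]
    exact ⟨Fin.cons 1 y, Fin.cases one_ne_zero hy, by
      rw [eval_eq_eval_mv_eval', hPy, Polynomial.eval_zero]⟩

theorem exists_torus_zero_iff_two_le_card_support {g : MvPolynomial (Fin n) K} (hg : g ≠ 0) :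
    (∃ x : Fin n → K, (∀ i, x i ≠ 0) ∧ eval x g = 0) ↔ 2 ≤ g.support.card := by
  refine ⟨fun ⟨x, hx, hgx⟩ => ?_, exists_torus_zero_of_two_le_card_support⟩
  by_contra! hcard
  exact eval_ne_zero_of_card_support_le_one hg (by omega) hx hgx

end MvPolynomial

end

theorem exists_mem_support_weight_eq_wdeg (u v : ℤ) {f : MvPolynomial (Fin 2) ℂ} (hf : f ≠ 0) :
    ∃ a ∈ f.support, (a 0 : ℤ) * u + (a 1 : ℤ) * v = wdeg u v f :=
  Set.Nonempty.csInf_mem ((Finset.coe_nonempty.mpr (support_nonempty.mpr hf)).image _)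
    (f.support.finite_toSet.image _)

theorem coeff_initForm_of_weight_eq_wdeg {u v : ℤ} {f : MvPolynomial (Fin 2) ℂ}
    {a : Fin 2 →₀ ℕ} (ha : (a 0 : ℤ) * u + (a 1 : ℤ) * v = wdeg u v f) :
    coeff a (initForm u v f) = coeff a f := by
  simp only [initForm, coeff_sum, coeff_monomial, Finset.sum_ite_eq', Finset.mem_filter, ha,
    and_true, ite_eq_left_iff]
  exact fun h => (notMem_support_iff.mp h).symm

theorem initForm_ne_zero_s8 (u v : ℤ) {f : MvPolynomial (Fin 2) ℂ} (hf : f ≠ 0) :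
    initForm u v f ≠ 0 := by
  obtain ⟨a, ha, hw⟩ := exists_mem_support_weight_eq_wdeg u v hf
  intro h0
  exact mem_support_iff.mp ha (by rw [← coeff_initForm_of_weight_eq_wdeg hw, h0, coeff_zero])

theorem initForm_torus_zero_iff_general (f : MvPolynomial (Fin 2) ℂ) (hf : f ≠ 0)
    (u v : ℤ) :
    (∃ x y : ℂ, x ≠ 0 ∧ y ≠ 0 ∧ eval ![x, y] (initForm u v f) = 0) ↔
      2 ≤ (initForm u v f).support.card := by
  rw [← exists_torus_zero_iff_two_le_card_support (initForm_ne_zero_s8 u v hf)]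
  simp only [Fin.exists_fin_succ_pi, Fin.exists_fin_zero_pi, Fin.forall_fin_two, and_assoc]
  rfl

/-- The initial form `in_{(u,v)}(f)` has a zero in the torus `(ℂ*)²` if and only if
its support has at least two points, i.e. iff `(u,v) ∈ Trop(f)`. -/
theorem initForm_torus_zero_iff (f : MvPolynomial (Fin 2) ℂ) (hf : f ≠ 0)
    (u v : ℤ) (huv : (u, v) ≠ (0, 0)) :
    (∃ x y : ℂ, x ≠ 0 ∧ y ≠ 0 ∧ eval ![x, y] (initForm u v f) = 0) ↔
      2 ≤ (initForm u v f).support.card :=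
  initForm_torus_zero_iff_general f hf u v
end
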